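/- arXiv:1210.8049 — 2 statements merged into one kernel-verified Lean document; each statement's English description precedes it below -/
import Mathlib

section
/- Let λ be a positive integer and η an odd integer coprime to λ. Define T_N = ∏_{k=1}^{N} (2 sin(π(2k−1)η/(2λ)))^{−2}. Then lim_{N→∞} (log|T_N|)/(2N) = −(log 2)/λ. -/
open Filter Finset Topology

/-!
With `u = exp (iπη/λ)` one has `|2 sin (π(2k-1)η/(2λ))| = ‖1 - u^(2k-1)‖`, so
`|T_N| = ‖∏_{k<N} (1 - u^(2k+1))‖⁻²`. Since `u^λ = -1` and `u²` is a primitive `λ`-th root of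
unity, any `λ` consecutive odd powers `u^(2k+1)` run through all roots of `X^λ + 1`, so every block
of `λ` consecutive factors has product `1 + 1 = 2`. Thus `log ‖∏_{k<N} (1 - u^(2k+1))‖` grows by
`log 2` per period `λ`, and divided by `N` it tends to `log 2 / λ`.
-/

theorem tendsto_div_atTop_of_add_period {a : ℕ → ℝ} {p : ℕ} (hp : 0 < p) {s : ℝ}
    (ha : ∀ n, a (n + p) = a n + s) : Tendsto (fun n : ℕ => a n / n) atTop (𝓝 (s / p)) := by
  set b : ℕ → ℝ := fun n => a n - n * (s / p)
  have hb : Function.Periodic b p := fun n => by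
    have : (p : ℝ) ≠ 0 := by positivity
    simp only [b, ha]; push_cast; field_simp; ring
  set C := ∑ r ∈ range p, |b r|
  have hb_le : ∀ n, |b n| ≤ C := fun n => by
    rw [← hb.map_mod_nat n]
    exact single_le_sum (fun r _ => abs_nonneg (b r)) (mem_range.2 (Nat.mod_lt n hp))
  have hb_div : Tendsto (fun n : ℕ => b n / n) atTop (𝓝 0) := by
    refine squeeze_zero_norm (fun n => ?_) (tendsto_const_div_atTop_nhds_zero_nat C)
    rw [Real.norm_eq_abs, abs_div, Nat.abs_cast]
    gcongr
    exact hb_le n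
  rw [← zero_add (s / p)]
  refine (hb_div.add_const (s / p)).congr' ?_
  filter_upwards [eventually_ne_atTop 0] with n hn
  have : (n : ℝ) ≠ 0 := by exact_mod_cast hn
  simp only [b]
  field_simp
  ring

theorem prod_range_one_sub_pow_mul_eq_two {R : Type*} [CommRing R] [IsDomain R] {ω α : R}
    {n : ℕ} (hn : 0 < n) (hω : IsPrimitiveRoot ω n) (hα : α ^ n = -1) :
    ∏ k ∈ range n, (1 - ω ^ k * α) = 2 := by
  have := congrArg (Polynomial.eval 1) (X_pow_sub_C_eq_prod hω hn hα)
  simp only [Polynomial.eval_sub, Polynomial.eval_pow, Polynomial.eval_X, Polynomial.eval_C,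
    Polynomial.eval_prod, one_pow, sub_neg_eq_add, one_add_one_eq_two] at this
  exact this.symm

section OddPowProd

variable {R : Type*} [CommRing R]

def oddPowProd (u : R) (m : ℕ) : R := ∏ k ∈ range m, (1 - u ^ (2 * k + 1))

theorem oddPowProd_add [IsDomain R] {u : R} {n : ℕ} (hn : 0 < n) (hω : IsPrimitiveRoot (u ^ 2) n)
    (hu : u ^ n = -1) (m : ℕ) : oddPowProd u (m + n) = oddPowProd u m * 2 := by
  have hα : (u ^ (2 * m + 1)) ^ n = -1 := by
    rw [← pow_mul, mul_comm, pow_mul, hu, Odd.neg_one_pow (odd_two_mul_add_one m)]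
  rw [oddPowProd, prod_range_add, ← prod_range_one_sub_pow_mul_eq_two hn hω hα]
  congr 2 with k
  ring

theorem oddPowProd_ne_zero [IsDomain R] [NeZero (2 : R)] {u : R} {n : ℕ} (hu : u ^ n = -1)
    (m : ℕ) : oddPowProd u m ≠ 0 := by
  refine prod_ne_zero_iff.2 fun k _ h => ?_
  have : (u ^ n) ^ (2 * k + 1) = 1 := by
    rw [← pow_mul, mul_comm, pow_mul, ← sub_eq_zero.1 h, one_pow]
  rw [hu, Odd.neg_one_pow (odd_two_mul_add_one k)] at this
  exact two_ne_zero (one_add_one_eq_two.symm.trans (neg_eq_iff_add_eq_zero.1 this))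

end OddPowProd

theorem tendsto_log_norm_oddPowProd_div {u : ℂ} {n : ℕ} (hn : 0 < n)
    (hω : IsPrimitiveRoot (u ^ 2) n) (hu : u ^ n = -1) :
    Tendsto (fun m : ℕ => Real.log ‖oddPowProd u m‖ / m) atTop (𝓝 (Real.log 2 / n)) :=
  tendsto_div_atTop_of_add_period hn fun m => by
    rw [oddPowProd_add hn hω hu, norm_mul, Complex.norm_two,
      Real.log_mul (norm_ne_zero_iff.2 (oddPowProd_ne_zero hu m)) two_ne_zero]

theorem norm_one_sub_exp_mul_I_pow (θ : ℝ) (m : ℕ) :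
    ‖1 - Complex.exp (θ * Complex.I) ^ m‖ = |2 * Real.sin (m * θ / 2)| := by
  rw [← Complex.exp_nat_mul, norm_sub_rev, ← Real.norm_eq_abs,
    ← Complex.norm_exp_I_mul_ofReal_sub_one]
  push_cast
  ring_nf

theorem prod_abs_two_mul_sin_eq_norm_oddPowProd (θ : ℝ) (N : ℕ) :
    ∏ k ∈ Icc 1 N, |2 * Real.sin ((2 * k - 1) * θ / 2)| =
      ‖oddPowProd (Complex.exp (θ * Complex.I)) N‖ := by
  rw [oddPowProd, norm_prod, ← Ico_add_one_right_eq_Icc, prod_Ico_eq_prod_range,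
    Nat.add_sub_cancel]
  refine prod_congr rfl fun k _ => ?_
  rw [norm_one_sub_exp_mul_I_pow]
  push_cast
  ring_nf

theorem exp_mul_I_pow_eq_neg_one {l : ℕ} (hl : 0 < l) {η : ℤ} (hη : Odd η) :
    Complex.exp (↑(Real.pi * η / l) * Complex.I) ^ l = -1 := by
  have : (l : ℂ) ≠ 0 := by exact_mod_cast hl.ne'
  rw [← Complex.exp_nat_mul, show (l : ℂ) * (↑(Real.pi * η / l) * Complex.I) =
      η * (Real.pi * Complex.I) by push_cast; field_simp,
    Complex.exp_int_mul, Complex.exp_pi_mul_I, hη.neg_one_zpow]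

theorem isPrimitiveRoot_exp_mul_I_sq {l : ℕ} (hl : 0 < l) {η : ℤ} (hη : Int.gcd η l = 1) :
    IsPrimitiveRoot (Complex.exp (↑(Real.pi * η / l) * Complex.I) ^ 2) l := by
  have hsq : Complex.exp (↑(Real.pi * η / l) * Complex.I) ^ 2 =
      Complex.exp (2 * Real.pi * Complex.I / l) ^ η := by
    rw [← Complex.exp_nat_mul, ← Complex.exp_int_mul]
    push_cast
    ring_nf
  rw [hsq]
  exact (Complex.isPrimitiveRoot_exp l hl.ne').zpow_of_gcd_eq_one η hη

theorem torsion_circle_leading_coeff (l : ℕ) (hl : 0 < l) (η : ℤ)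
    (hodd : Odd η) (hcop : Int.gcd η (l : ℤ) = 1) :
    Tendsto
      (fun N : ℕ =>
        Real.log |∏ k ∈ Finset.Icc 1 N,
            (2 * Real.sin (Real.pi * (2 * (k : ℝ) - 1) * η / (2 * l))) ^ (-2 : ℤ)|
          / (2 * N))
      atTop (nhds (-(Real.log 2) / l)) := by
  set θ : ℝ := Real.pi * η / l
  have hlog : ∀ N : ℕ,
      Real.log |∏ k ∈ Finset.Icc 1 N,
          (2 * Real.sin (Real.pi * (2 * (k : ℝ) - 1) * η / (2 * l))) ^ (-2 : ℤ)| / (2 * N) =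
        -(Real.log ‖oddPowProd (Complex.exp (θ * Complex.I)) N‖ / N) := fun N => by
    have harg : ∀ k : ℕ, Real.pi * (2 * (k : ℝ) - 1) * η / (2 * l) = (2 * k - 1) * θ / 2 :=
      fun k => by ring
    simp_rw [harg, abs_prod, abs_zpow, prod_zpow, prod_abs_two_mul_sin_eq_norm_oddPowProd,
      Real.log_zpow]
    push_cast
    ring
  simpa only [hlog, neg_div] using
    (tendsto_log_norm_oddPowProd_div hl (isPrimitiveRoot_exp_mul_I_sq hl hcop)
      (exp_mul_I_pow_eq_neg_one hl hodd)).neg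
end

section
/- Let p, q be coprime integers ≥ 2, and let a, b be odd integers with 0 < a < p, 0 < b < q. Define T_N = 2^{2N} / ∏_{k=1}^{N} (16 sin²(π(2k−1)a/(2p)) sin²(π(2k−1)b/(2q))). Then lim_{N→∞} (log|T_N|)/(2N) = (1 − 1/p′ − 1/q′) log 2, where p′ = p/gcd(p,a) and q′ = q/gcd(q,b). -/
/-!
For odd `η` coprime to `n`, the numbers `exp (iπ(2k+1)η/n)`, `k < n`, are exactly the roots of
`X^n + 1`; evaluating at `1` gives `∏ₖ 2|sin (π(2k+1)η/(2n))| = 2`. After dividing `a` by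
`gcd p a`, the sequence `k ↦ log |2 sin (π(2k+1)a/(2p))|` is periodic with period `p' = p / gcd p a`
and sums to `log 2` over a period, so its Cesàro means tend to `log 2 / p'`. Since
`log |T_N| = 2N log 2 - 2 ∑ₖ (log |2 sin αₖ| + log |2 sin βₖ|)`, the limit follows.
-/

open Filter Finset Real Topology

theorem Function.Periodic.sum_range_add {M : Type*} [AddCancelCommMonoid M] {f : ℕ → M} {T : ℕ}
    (hf : Function.Periodic f T) (N : ℕ) :
    ∑ k ∈ range T, f (N + k) = ∑ k ∈ range T, f k := by
  induction N with
  | zero => simp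
  | succ N ih =>
    have h := (sum_range_succ' (fun k => f (N + k)) T).symm.trans
      (sum_range_succ (fun k => f (N + k)) T)
    rw [add_zero, hf N, ih] at h
    simpa only [add_right_comm N 1, ← add_assoc] using add_right_cancel h

theorem Function.Periodic.tendsto_div_natCast_atTop {g : ℕ → ℝ} {T : ℕ}
    (hg : Function.Periodic g T) (hT : 0 < T) :
    Tendsto (fun N : ℕ => g N / N) atTop (𝓝 0) := by
  have hbound (N : ℕ) : |g N| ≤ ∑ k ∈ range T, |g k| :=
    hg.map_mod_nat N ▸ single_le_sum (f := fun k => |g k|) (fun _ _ => abs_nonneg _)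
      (mem_range.2 (Nat.mod_lt N hT))
  refine squeeze_zero_norm (fun N => ?_)
    (tendsto_const_div_atTop_nhds_zero_nat (∑ k ∈ range T, |g k|))
  rw [norm_div, Real.norm_eq_abs, RCLike.norm_natCast]
  exact div_le_div_of_nonneg_right (hbound N) N.cast_nonneg

theorem Function.Periodic.tendsto_sum_range_div {f : ℕ → ℝ} {T : ℕ}
    (hf : Function.Periodic f T) (hT : 0 < T) :
    Tendsto (fun N : ℕ => (∑ k ∈ range N, f k) / N) atTop
      (𝓝 ((∑ k ∈ range T, f k) / T)) := by
  set m := (∑ k ∈ range T, f k) / T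
  have hg : Function.Periodic (fun N : ℕ => ∑ k ∈ range N, f k - N * m) T := by
    intro N
    simp only [Finset.sum_range_add, hf.sum_range_add, Nat.cast_add, m]
    field_simp
    ring
  have h := (hg.tendsto_div_natCast_atTop hT).add_const m
  rw [zero_add] at h
  refine h.congr' ?_
  filter_upwards [eventually_ne_atTop 0] with N hN
  field_simp
  ring

theorem sin_pi_mul_odd_div_ne_zero {m : ℤ} (hm : Odd m) {n : ℕ} (hn : n ≠ 0) :
    sin (π * m / (2 * n)) ≠ 0 := by
  refine sin_ne_zero_iff.2 fun j hj => ?_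
  have hjm : (j * (2 * n) : ℤ) = m := by
    have : (n : ℝ) ≠ 0 := by exact_mod_cast hn
    field_simp at hj
    exact_mod_cast (by linear_combination hj : (j * (2 * n) : ℝ) = m)
  exact Int.not_even_iff_odd.2 hm (hjm ▸ ⟨j * n, by ring⟩)

theorem prod_range_two_mul_abs_sin {n η : ℕ} (hn : 0 < n) (hη : Odd η) (hco : η.Coprime n) :
    ∏ k ∈ range n, 2 * |sin (π * (2 * k + 1) * η / (2 * n))| = 2 := by
  set ξ : ℂ := Complex.exp (π * η / n * Complex.I)
  have hn' : (n : ℂ) ≠ 0 := by exact_mod_cast hn.ne'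
  have hξn : ξ ^ n = -1 := by
    rw [← Complex.exp_nat_mul, show (n : ℂ) * (π * η / n * Complex.I) = η * (π * Complex.I) by
      field_simp, Complex.exp_nat_mul, Complex.exp_pi_mul_I, hη.neg_one_pow]
  have hζ : IsPrimitiveRoot (ξ ^ 2) n := by
    rw [← Complex.exp_nat_mul]
    convert Complex.isPrimitiveRoot_exp_of_coprime η n hn.ne' hco using 2
    push_cast
    ring
  have hroots : ∏ k ∈ range n, (1 - (ξ ^ 2) ^ k * ξ) = 2 := by
    simpa [hξn, one_add_one_eq_two, Polynomial.eval_prod, eq_comm] using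
      congrArg (Polynomial.eval 1) (X_pow_sub_C_eq_prod hζ hn hξn)
  have hterm (k : ℕ) :
      ‖1 - (ξ ^ 2) ^ k * ξ‖ = 2 * |sin (π * (2 * k + 1) * η / (2 * n))| := by
    have hexp : (ξ ^ 2) ^ k * ξ
        = Complex.exp (Complex.I * ((2 * (π * (2 * k + 1) * η / (2 * n)) : ℝ) : ℂ)) := by
      rw [← pow_mul, ← pow_succ, ← Complex.exp_nat_mul]
      congr 1
      push_cast
      field_simp
    rw [hexp, norm_sub_rev, Complex.norm_exp_I_mul_ofReal_sub_one,
      mul_div_cancel_left₀ _ two_ne_zero, norm_mul, Real.norm_two, Real.norm_eq_abs]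
  simp_rw [← hterm]
  rw [← norm_prod, hroots, Complex.norm_two]

theorem sin_pi_mul_odd_mul_odd_div_ne_zero (k : ℕ) {a p : ℕ} (ha : Odd a) (hp : p ≠ 0) :
    sin (π * (2 * k + 1) * a / (2 * p)) ≠ 0 := by
  have := sin_pi_mul_odd_div_ne_zero (m := (2 * k + 1) * a) (by simp [ha]) hp
  push_cast [← mul_assoc] at this
  exact this

theorem periodic_log_abs_two_sin (a p : ℕ) :
    Function.Periodic (fun k : ℕ => log |2 * sin (π * (2 * k + 1) * a / (2 * p))|) p := by
  intro k
  rcases eq_or_ne p 0 with rfl | hp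
  · simp
  have hshift : π * (2 * ((k + p : ℕ) : ℝ) + 1) * a / (2 * p)
      = π * (2 * k + 1) * a / (2 * p) + a * π := by
    push_cast
    field_simp
    ring
  simp only [hshift, sin_add_nat_mul_pi, abs_mul, abs_pow, abs_neg, abs_one, one_pow, one_mul]

theorem tendsto_avg_log_abs_two_sin_of_coprime {a p : ℕ} (hp : 0 < p) (ha : Odd a)
    (hco : a.Coprime p) :
    Tendsto (fun N : ℕ => (∑ k ∈ range N, log |2 * sin (π * (2 * k + 1) * a / (2 * p))|) / N)
      atTop (𝓝 (log 2 / p)) := by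
  have hperiod : ∑ k ∈ range p, log |2 * sin (π * (2 * k + 1) * a / (2 * p))| = log 2 := by
    have hne (k : ℕ) : 2 * |sin (π * (2 * k + 1) * a / (2 * p))| ≠ 0 := by
      simpa using sin_pi_mul_odd_mul_odd_div_ne_zero k ha hp.ne'
    simp_rw [abs_mul, abs_two]
    rw [← log_prod fun k _ => hne k, prod_range_two_mul_abs_sin hp ha hco]
  simpa only [hperiod] using (periodic_log_abs_two_sin a p).tendsto_sum_range_div hp

theorem tendsto_avg_log_abs_two_sin {a p : ℕ} (hp : 0 < p) (ha : Odd a) :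
    Tendsto (fun N : ℕ => (∑ k ∈ range N, log |2 * sin (π * (2 * k + 1) * a / (2 * p))|) / N)
      atTop (𝓝 (log 2 / (p / p.gcd a : ℕ))) := by
  have hg : 0 < p.gcd a := Nat.gcd_pos_of_pos_left a hp
  have hangle (x : ℝ) : x * a / (2 * p) = x * (a / p.gcd a : ℕ) / (2 * (p / p.gcd a : ℕ)) := by
    rw [mul_div_mul_comm, mul_div_mul_comm, Nat.cast_div_div_div_cancel_right
      (Nat.gcd_dvd_left p a) (Nat.gcd_dvd_right p a)]
  simp_rw [hangle]
  exact tendsto_avg_log_abs_two_sin_of_coprime (Nat.div_pos (Nat.gcd_le_left a hp) hg)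
    (ha.of_dvd_nat (Nat.div_dvd_of_dvd (Nat.gcd_dvd_right p a)))
    (Nat.coprime_div_gcd_div_gcd hg).symm

theorem prod_Icc_one_eq_prod_range {M : Type*} [CommMonoid M] (f : ℕ → M) (N : ℕ) :
    ∏ k ∈ Icc 1 N, f k = ∏ k ∈ range N, f (k + 1) := by
  rw [← Ico_add_one_right_eq_Icc, prod_Ico_eq_prod_range, Nat.add_sub_cancel]
  simp only [add_comm 1]

theorem log_abs_two_pow_div_prod_sq_mul_sq {x y : ℕ → ℝ} (hx : ∀ k, x k ≠ 0) (hy : ∀ k, y k ≠ 0)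
    (N : ℕ) :
    log |(2 : ℝ) ^ (2 * N) / ∏ k ∈ range N, (x k ^ 2 * y k ^ 2)|
      = 2 * (N * log 2 - ∑ k ∈ range N, log |x k| - ∑ k ∈ range N, log |y k|) := by
  have hterm (k : ℕ) : x k ^ 2 * y k ^ 2 ≠ 0 := by simp [hx k, hy k]
  rw [log_abs, log_div (by positivity) (prod_ne_zero_iff.2 fun k _ => hterm k),
    log_prod fun k _ => hterm k, log_pow]
  simp only [log_mul (pow_ne_zero 2 (hx _)) (pow_ne_zero 2 (hy _)), log_pow, ← log_abs (x _),
    ← log_abs (y _), sum_add_distrib, ← mul_sum]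
  push_cast
  ring

theorem torus_knot_leading_coeff_general
    (p q : ℕ) (hp : 2 ≤ p) (hq : 2 ≤ q)
    (a b : ℕ)
    (haodd : Odd a) (hbodd : Odd b) :
    Tendsto
      (fun N : ℕ =>
        Real.log |(2 : ℝ) ^ (2 * N) /
            ∏ k ∈ Finset.Icc 1 N,
              (16 * Real.sin (Real.pi * (2 * (k : ℝ) - 1) * a / (2 * p)) ^ 2
                  * Real.sin (Real.pi * (2 * (k : ℝ) - 1) * b / (2 * q)) ^ 2)|
          / (2 * N))
      atTop
      (nhds ((1 - 1 / ((p / Nat.gcd p a : ℕ) : ℝ)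
          - 1 / ((q / Nat.gcd q b : ℕ) : ℝ)) * Real.log 2)) := by
  have hlim := ((tendsto_const_nhds (x := log 2)).sub
    (tendsto_avg_log_abs_two_sin (by omega : 0 < p) haodd)).sub
    (tendsto_avg_log_abs_two_sin (by omega : 0 < q) hbodd)
  rw [show ∀ x y : ℝ, (1 - 1 / x - 1 / y) * log 2 = log 2 - log 2 / x - log 2 / y by
    intros; ring]
  refine hlim.congr' ?_
  filter_upwards [eventually_ne_atTop 0] with N hN
  have hreindex (k c r : ℕ) : π * (2 * ((k + 1 : ℕ) : ℝ) - 1) * c / (2 * r)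
      = π * (2 * k + 1) * c / (2 * r) := by
    push_cast; ring
  rw [prod_Icc_one_eq_prod_range]
  simp only [hreindex, show ∀ s t : ℝ, 16 * s ^ 2 * t ^ 2 = (2 * s) ^ 2 * (2 * t) ^ 2 by
    intros; ring]
  rw [log_abs_two_pow_div_prod_sq_mul_sq
    (fun k => mul_ne_zero two_ne_zero (sin_pi_mul_odd_mul_odd_div_ne_zero k haodd (by omega)))
    (fun k => mul_ne_zero two_ne_zero (sin_pi_mul_odd_mul_odd_div_ne_zero k hbodd (by omega))),
    mul_div_mul_left _ _ two_ne_zero, sub_div, sub_div,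
    mul_div_cancel_left₀ _ (Nat.cast_ne_zero.2 hN)]

theorem torus_knot_leading_coeff
    (p q : ℕ) (hp : 2 ≤ p) (hq : 2 ≤ q) (hpq : Nat.Coprime p q)
    (a b : ℕ) (ha : 0 < a) (hap : a < p) (hb : 0 < b) (hbq : b < q)
    (haodd : Odd a) (hbodd : Odd b) :
    Tendsto
      (fun N : ℕ =>
        Real.log |(2 : ℝ) ^ (2 * N) /
            ∏ k ∈ Finset.Icc 1 N,
              (16 * Real.sin (Real.pi * (2 * (k : ℝ) - 1) * a / (2 * p)) ^ 2
                  * Real.sin (Real.pi * (2 * (k : ℝ) - 1) * b / (2 * q)) ^ 2)|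
          / (2 * N))
      atTop
      (nhds ((1 - 1 / ((p / Nat.gcd p a : ℕ) : ℝ)
          - 1 / ((q / Nat.gcd q b : ℕ) : ℝ)) * Real.log 2)) :=
  torus_knot_leading_coeff_general p q hp hq a b haodd hbodd
end
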